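/- The aliasing-projection function preserves satisfiability over the retained variables: for a conjunction α of equalities and disequalities over variables, and a subset V of variables, define proj(α, V) by eliminating each equality v1 = v2 with v1 ∉ V via substitution and dropping disequalities mentioning variables outside V. Then any assignment σ satisfying α, restricted to V, satisfies proj(α, V). -/
import Mathlib


/-- Conjunctions of equality/disequality atoms over variables. -/
inductive AForm (V : Type) where
  | tt : AForm V
  | ff : AForm V
  | eqc (v1 v2 : V) (α : AForm V) : AForm V
  | nec (v1 v2 : V) (α : AForm V) : AForm V

namespace AForm

variable {V : Type}

def size : AForm V → ℕ
  | tt => 0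
  | ff => 0
  | eqc _ _ α => α.size + 1
  | nec _ _ α => α.size + 1

/-- `subst x y α` replaces every occurrence of `x` by `y` (i.e. `α[y/x]`). -/
def subst [DecidableEq V] (x y : V) : AForm V → AForm V
  | tt => tt
  | ff => ff
  | eqc v1 v2 α =>
      eqc (if v1 = x then y else v1) (if v2 = x then y else v2) (subst x y α)
  | nec v1 v2 α =>
      nec (if v1 = x then y else v1) (if v2 = x then y else v2) (subst x y α)

theorem size_subst [DecidableEq V] (x y : V) (α : AForm V) :
    (subst x y α).size = α.size := by
  induction α <;> simp [subst, size, *]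

/-- The aliasing-projection function onto the retained variable set `W`. -/
def proj [DecidableEq V] (W : Finset V) : AForm V → AForm V
  | tt => tt
  | ff => ff
  | eqc v1 v2 α =>
      if v1 ∉ W then proj W (α.subst v1 v2)
      else if v2 ∉ W then proj W (α.subst v2 v1)
      else eqc v1 v2 (proj W α)
  | nec v1 v2 α =>
      if v1 = v2 then ff
      else if v1 ∈ W ∧ v2 ∈ W then nec v1 v2 (proj W α)
      else proj W α
  termination_by α => α.size
  decreasing_by all_goals simp [size_subst, size]

/-- Satisfaction of a conjunction of atoms by a valuation. -/
def sat {D : Type} (σ : V → D) : AForm V → Prop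
  | tt => True
  | ff => False
  | eqc v1 v2 α => σ v1 = σ v2 ∧ sat σ α
  | nec v1 v2 α => σ v1 ≠ σ v2 ∧ sat σ α

end AForm

/-- Substitution `α[y/x]` preserves satisfaction when `σ x = σ y`. -/
theorem AForm.sat_subst {V D : Type} [DecidableEq V] (σ : V → D) (x y : V) (h : σ x = σ y)
    (α : AForm V) : (AForm.subst x y α).sat σ ↔ α.sat σ := by
  have key : ∀ v, σ (if v = x then y else v) = σ v := by
    intro v; split <;> simp_all
  induction α <;> simp [AForm.subst, AForm.sat, key, *]

theorem AForm.proj_sound {V D : Type} [DecidableEq V] (W : Finset V) :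
    ∀ n (α : AForm V), α.size ≤ n → ∀ (σ : V → D), α.sat σ →
      ∀ σ' : V → D, (∀ v ∈ W, σ' v = σ v) → (AForm.proj W α).sat σ' := by
  intro n
  induction n with
  | zero =>
    intro α hle σ hsat σ' hagree
    cases α with
    | tt => simp [AForm.proj, AForm.sat]
    | ff => exact hsat.elim
    | eqc v1 v2 β => simp [AForm.size] at hle
    | nec v1 v2 β => simp [AForm.size] at hle
  | succ n ih =>
    intro α hle σ hsat σ' hagree
    cases α with
    | tt => simp [AForm.proj, AForm.sat]
    | ff => exact hsat.elim
    | eqc v1 v2 β =>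
      obtain ⟨heq, hβ⟩ := hsat
      by_cases h1 : v1 ∈ W
      · by_cases h2 : v2 ∈ W
        · rw [AForm.proj, if_neg (not_not_intro h1), if_neg (not_not_intro h2)]
          refine ⟨?_, ih _ (by simpa [AForm.size] using hle) σ hβ σ' hagree⟩
          rw [hagree v1 h1, hagree v2 h2, heq]
        · rw [AForm.proj, if_neg (not_not_intro h1), if_pos h2]
          exact ih _ (by simpa [AForm.size_subst, AForm.size] using hle) σ
            ((AForm.sat_subst σ v2 v1 heq.symm β).mpr hβ) σ' hagree
      · rw [AForm.proj, if_pos h1]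
        exact ih _ (by simpa [AForm.size_subst, AForm.size] using hle) σ
          ((AForm.sat_subst σ v1 v2 heq β).mpr hβ) σ' hagree
    | nec v1 v2 β =>
      obtain ⟨hne, hβ⟩ := hsat
      by_cases h0 : v1 = v2
      · exact (hne (by rw [h0])).elim
      rw [AForm.proj, if_neg h0]
      by_cases h2 : v1 ∈ W ∧ v2 ∈ W
      · rw [if_pos h2]
        refine ⟨?_, ih _ (by simpa [AForm.size] using hle) σ hβ σ' hagree⟩
        rw [hagree v1 h2.1, hagree v2 h2.2]; exact hne
      · rw [if_neg h2]
        exact ih _ (by simpa [AForm.size] using hle) σ hβ σ' hagree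


/-- Soundness of projection: any valuation satisfying `α`, restricted to the
retained variables `W` (i.e. any valuation agreeing with it on `W`),
satisfies `proj α W`. -/
theorem stmt_18 {V D : Type} [DecidableEq V]
    (W : Finset V) (α : AForm V) (σ : V → D)
    (hsat : α.sat σ)
    (σ' : V → D) (hagree : ∀ v ∈ W, σ' v = σ v) :
    (AForm.proj W α).sat σ' := by
  exact AForm.proj_sound W α.size α le_rfl σ hsat σ' hagree
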